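/- Let φ > 0, β > 1/2, c₁ > 0, and let γ > 0 and κ > 0 satisfy φγ < β − 1/2 − κ. For each n ∈ ℕ set ℓₙ = ⌊c₁ nᵝ⌋ and let Φⁿ₁,…,Φⁿ_{ℓₙ} be mutually independent random variables on a common probability space, each exponentially distributed with some rate lying in (0, φ] (no independence across different n is assumed). Then, almost surely, for all but finitely many n one has #{i ≤ ℓₙ : Φⁿᵢ ≥ γ log n} > n^{1/2+κ}. -/

import Mathlib

/-!
Each `Φⁿᵢ` exceeds `L = γ log n` with probability at least `exp (-φ L) = n^(-φγ)`, so the count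
is a sum of `ℓₙ` independent indicators with mean at least `c₁ n^(β - φγ) - 1`, larger than
`n^(1/2 + κ)` by a power of `n`. The Chernoff bound at `t = -1` makes the probability that the
count is at most `n^(1/2 + κ)` smaller than `n⁻²` for large `n`, and Borel–Cantelli concludes.
-/

open MeasureTheory ProbabilityTheory Filter

/-- A real random variable `X` is exponentially distributed with rate `rate > 0` if
`P(X > t) = exp(-rate * t)` for every `t ≥ 0`. -/
def IsExpRV {Ω : Type*} [MeasurableSpace Ω] (P : Measure Ω) (rate : ℝ) (X : Ω → ℝ) : Prop :=
  Measurable X ∧ ∀ t : ℝ, 0 ≤ t → P {ω | t < X ω} = ENNReal.ofReal (Real.exp (-rate * t))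

open Real Asymptotics

lemma natCard_mem_eq_sum_indicator {Ω ι : Type*} [Fintype ι] (A : ι → Set Ω) (ω : Ω) :
    (Nat.card {i // ω ∈ A i} : ℝ) = ∑ i, (A i).indicator (fun _ => (1 : ℝ)) ω := by
  classical
  simp [Set.indicator_apply, Finset.sum_boole, Nat.card_eq_fintype_card, Fintype.card_subtype]

namespace ProbabilityTheory

variable {Ω ι : Type*} [MeasurableSpace Ω] {μ : Measure Ω}

lemma iIndepFun.iIndepSet_preimage {β : Type*} [MeasurableSpace β] {X : ι → Ω → β}
    (h : iIndepFun X μ) {B : ι → Set β} (hB : ∀ i, MeasurableSet (B i)) :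
    iIndepSet (fun i => X i ⁻¹' B i) μ :=
  (iIndepSet_iff_iIndep _ _).2 <| iIndep_of_iIndep_of_le h fun i =>
    MeasurableSpace.generateFrom_le fun _ hs => hs ▸ ⟨B i, hB i, rfl⟩

lemma mgf_indicator_one [IsProbabilityMeasure μ] {A : Set Ω} (hA : MeasurableSet A) (t : ℝ) :
    mgf (A.indicator fun _ => (1 : ℝ)) μ t = 1 + (exp t - 1) * μ.real A := by
  have h : (fun ω => exp (t * A.indicator (fun _ => (1 : ℝ)) ω))
      = fun ω => 1 + A.indicator (fun _ => exp t - 1) ω := by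
    ext ω; by_cases hω : ω ∈ A <;> simp [hω]
  rw [mgf, h, integral_add (integrable_const _) ((integrable_const _).indicator hA),
    integral_const, integral_indicator_const _ hA]
  simp [mul_comm]

lemma mgf_indicator_one_neg_one_le [IsProbabilityMeasure μ] {A : Set Ω} (hA : MeasurableSet A) :
    mgf (A.indicator fun _ => (1 : ℝ)) μ (-1) ≤ exp (-((1 - exp (-1)) * μ.real A)) :=
  calc mgf (A.indicator fun _ => (1 : ℝ)) μ (-1) = -((1 - exp (-1)) * μ.real A) + 1 := by
        rw [mgf_indicator_one hA]; ring
    _ ≤ exp (-((1 - exp (-1)) * μ.real A)) := add_one_le_exp _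

theorem measureReal_card_le_le_exp [Fintype ι] {A : ι → Set Ω} (hA : ∀ i, MeasurableSet (A i))
    (hindep : iIndepSet A μ) {q : ℝ} (hq : ∀ i, q ≤ μ.real (A i)) (x : ℝ) :
    μ.real {ω | (Nat.card {i // ω ∈ A i} : ℝ) ≤ x}
      ≤ exp (x - (1 - exp (-1)) * q * Fintype.card ι) := by
  have := hindep.isProbabilityMeasure
  set Y : ι → Ω → ℝ := fun i => (A i).indicator fun _ => 1
  have hY : ∀ i, Measurable (Y i) := fun i => measurable_const.indicator (hA i)
  have hcard : ∀ ω, (Nat.card {i // ω ∈ A i} : ℝ) = (∑ i, Y i) ω := fun ω => by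
    rw [Finset.sum_apply, natCard_mem_eq_sum_indicator]
  have hint : Integrable (fun ω => exp (-1 * (∑ i, Y i) ω)) μ := by
    refine .of_bound (by fun_prop) 1 (ae_of_all _ fun ω => ?_)
    have hS : 0 ≤ (∑ i, Y i) ω := hcard ω ▸ Nat.cast_nonneg _
    rw [norm_of_nonneg (exp_pos _).le, exp_le_one_iff]
    linarith
  have hmgf : mgf (∑ i, Y i) μ (-1) ≤ exp (-((1 - exp (-1)) * q * Fintype.card ι)) := by
    have hc : 0 ≤ 1 - exp (-1) := sub_nonneg.2 (exp_le_one_iff.2 (by norm_num))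
    rw [hindep.iIndepFun_indicator.mgf_sum hY]
    calc ∏ i, mgf (Y i) μ (-1) ≤ ∏ _i : ι, exp (-((1 - exp (-1)) * q)) :=
          Finset.prod_le_prod (fun _ _ => mgf_nonneg) fun i _ =>
            (mgf_indicator_one_neg_one_le (hA i)).trans (by gcongr; exact hq i)
      _ = exp (-((1 - exp (-1)) * q * Fintype.card ι)) := by
          rw [Finset.prod_const, ← exp_nat_mul, Finset.card_univ]; ring_nf
  calc μ.real {ω | (Nat.card {i // ω ∈ A i} : ℝ) ≤ x}
      = μ.real {ω | (∑ i, Y i) ω ≤ x} := by simp_rw [hcard]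
    _ ≤ exp (-(-1) * x) * mgf (∑ i, Y i) μ (-1) := measure_le_le_exp_mul_mgf x (by norm_num) hint
    _ ≤ exp (x - (1 - exp (-1)) * q * Fintype.card ι) := by
        rw [sub_eq_add_neg, exp_add, neg_neg, one_mul]
        gcongr

end ProbabilityTheory

lemma IsExpRV.exp_neg_mul_le_measureReal {Ω : Type*} [MeasurableSpace Ω] {P : Measure Ω}
    [IsFiniteMeasure P] {rate φ t : ℝ} {X : Ω → ℝ} (hX : IsExpRV P rate X) (hrate : rate ≤ φ)
    (ht : 0 ≤ t) : exp (-φ * t) ≤ P.real {ω | t ≤ X ω} :=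
  calc exp (-φ * t) ≤ exp (-rate * t) := by gcongr
    _ = P.real {ω | t < X ω} := by
        rw [measureReal_def, hX.2 t ht, ENNReal.toReal_ofReal (exp_pos _).le]
    _ ≤ P.real {ω | t ≤ X ω} := measureReal_mono fun ω (h : t < X ω) => h.le

lemma ae_eventually_notMem_of_measureReal_le {Ω : Type*} [MeasurableSpace Ω] {μ : Measure Ω}
    [IsFiniteMeasure μ] {s : ℕ → Set Ω} {u : ℕ → ℝ} (hu : Summable u)
    (h : ∀ᶠ n in atTop, μ.real (s n) ≤ u n) : ∀ᵐ ω ∂μ, ∀ᶠ n in atTop, ω ∉ s n := by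
  have hs : Summable fun n => μ.real (s n) :=
    hu.of_norm_bounded_eventually_nat <| h.mono fun n hn => by
      rwa [norm_of_nonneg measureReal_nonneg]
  refine ae_eventually_notMem ?_
  rw [← funext fun n => ofReal_measureReal (μ := μ) (s := s n),
    ← ENNReal.ofReal_tsum_of_nonneg (fun _ => measureReal_nonneg) hs]
  exact ENNReal.ofReal_ne_top

lemma isLittleO_rpow_rpow_atTop {s r : ℝ} (h : s < r) :
    (fun x : ℝ => x ^ s) =o[atTop] fun x => x ^ r := by
  refine (isLittleO_iff_tendsto' ?_).2 ?_
  · filter_upwards [eventually_gt_atTop 0] with x hx h0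
    exact absurd h0 (rpow_pos_of_pos hx r).ne'
  · refine (tendsto_rpow_neg_atTop (sub_pos.2 h)).congr' ?_
    filter_upwards [eventually_gt_atTop 0] with x hx
    rw [← rpow_sub hx, neg_sub]

lemma eventually_rpow_add_log_le_mul_rpow {s r a : ℝ} (hsr : s < r) (hr : 0 < r) (ha : 0 < a)
    (b c : ℝ) : ∀ᶠ x : ℝ in atTop, x ^ s + b + c * log x ≤ a * x ^ r := by
  have h : (fun x : ℝ => x ^ s + b + c * log x) =o[atTop] fun x => x ^ r :=
    ((isLittleO_rpow_rpow_atTop hsr).add (isLittleO_const_left.2 <| Or.inr <|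
      tendsto_norm_atTop_atTop.comp (tendsto_rpow_atTop hr))).add
      ((isLittleO_log_rpow_atTop hr).const_mul_left c)
  filter_upwards [h.bound ha, eventually_ge_atTop 0] with x hx hx0
  rw [norm_of_nonneg (rpow_nonneg hx0 r)] at hx
  exact (le_abs_self _).trans hx

lemma eventually_exp_sub_le_rpow_neg_two {s β p c₁ a : ℝ} (hp : 0 ≤ p) (hs : s < β - p)
    (hβp : 0 < β - p) (hc₁ : 0 < c₁) (ha : 0 < a) :
    ∀ᶠ n : ℕ in atTop,
      exp ((n : ℝ) ^ s - a * exp (-p * log n) * ⌊c₁ * (n : ℝ) ^ β⌋₊) ≤ (n : ℝ) ^ (-2 : ℝ) := by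
  filter_upwards [tendsto_natCast_atTop_atTop.eventually
    (eventually_rpow_add_log_le_mul_rpow hs hβp (mul_pos ha hc₁) a 2), eventually_ge_atTop 1]
    with n hn hn1
  have hx : (0 : ℝ) < n := by exact_mod_cast hn1
  have hfloor : c₁ * (n : ℝ) ^ (β - p) - 1 ≤ (n : ℝ) ^ (-p) * ⌊c₁ * (n : ℝ) ^ β⌋₊ :=
    calc c₁ * (n : ℝ) ^ (β - p) - 1 ≤ (n : ℝ) ^ (-p) * (c₁ * (n : ℝ) ^ β - 1) := by
          have hle : (n : ℝ) ^ (-p) ≤ 1 :=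
            rpow_le_one_of_one_le_of_nonpos (by exact_mod_cast hn1) (neg_nonpos.2 hp)
          rw [sub_eq_add_neg β, rpow_add hx]
          linear_combination hle
      _ ≤ (n : ℝ) ^ (-p) * ⌊c₁ * (n : ℝ) ^ β⌋₊ := by
          gcongr; exact (Nat.sub_one_lt_floor _).le
  rw [mul_assoc, mul_comm (-p), ← rpow_def_of_pos hx, rpow_def_of_pos hx (-2), exp_le_exp]
  nlinarith [mul_le_mul_of_nonneg_left hfloor ha.le]

theorem stmt_3_general
    {Ω : Type*} [MeasurableSpace Ω] (P : Measure Ω) [IsProbabilityMeasure P]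
    (φ β c₁ γ κ : ℝ) (hφpos : 0 < φ) (hc₁ : 0 < c₁)
    (hγ : 0 < γ) (hκ : 0 < κ) (hκγ : φ * γ < β - 1 / 2 - κ)
    (φr : (n : ℕ) → Fin ⌊c₁ * (n : ℝ) ^ β⌋₊ → ℝ)
    (hφr : ∀ n i, 0 < φr n i ∧ φr n i ≤ φ)
    (Φ : (n : ℕ) → Fin ⌊c₁ * (n : ℝ) ^ β⌋₊ → Ω → ℝ)
    (hΦexp : ∀ n i, IsExpRV P (φr n i) (Φ n i))
    (hΦind : ∀ n, iIndepFun (Φ n) P) :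
    ∀ᵐ ω ∂P, ∀ᶠ n : ℕ in atTop,
      (n : ℝ) ^ ((1 : ℝ) / 2 + κ) < (Nat.card {i // γ * Real.log n ≤ Φ n i ω} : ℝ) := by
  have hbound : ∀ᶠ n : ℕ in atTop,
      P.real {ω | (Nat.card {i // γ * log n ≤ Φ n i ω} : ℝ) ≤ (n : ℝ) ^ ((1 : ℝ) / 2 + κ)}
        ≤ (n : ℝ) ^ (-2 : ℝ) := by
    filter_upwards [eventually_exp_sub_le_rpow_neg_two (s := 1 / 2 + κ) (β := β) (p := φ * γ)
      (by positivity) (by linarith) (by linarith) hc₁ (sub_pos.2 (exp_lt_one_iff.2 neg_one_lt_zero))]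
      with n hn
    have hL : 0 ≤ γ * log n := mul_nonneg hγ.le (log_natCast_nonneg n)
    have hq : ∀ i, exp (-(φ * γ) * log n) ≤ P.real {ω | γ * log n ≤ Φ n i ω} := fun i => by
      simpa only [neg_mul, mul_assoc] using (hΦexp n i).exp_neg_mul_le_measureReal (hφr n i).2 hL
    refine (measureReal_card_le_le_exp (fun i => (hΦexp n i).1 measurableSet_Ici)
      ((hΦind n).iIndepSet_preimage fun _ => measurableSet_Ici) hq _).trans ?_
    simpa only [Fintype.card_fin] using hn
  filter_upwards [ae_eventually_notMem_of_measureReal_le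
    (summable_nat_rpow.2 (by norm_num)) hbound] with ω hω
  exact hω.mono fun n hn => not_le.1 hn

theorem stmt_3
    {Ω : Type*} [MeasurableSpace Ω] (P : Measure Ω) [IsProbabilityMeasure P]
    (φ β c₁ γ κ : ℝ) (hφpos : 0 < φ) (hβ : 1 / 2 < β) (hc₁ : 0 < c₁)
    (hγ : 0 < γ) (hκ : 0 < κ) (hκγ : φ * γ < β - 1 / 2 - κ)
    (φr : (n : ℕ) → Fin ⌊c₁ * (n : ℝ) ^ β⌋₊ → ℝ)
    (hφr : ∀ n i, 0 < φr n i ∧ φr n i ≤ φ)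
    (Φ : (n : ℕ) → Fin ⌊c₁ * (n : ℝ) ^ β⌋₊ → Ω → ℝ)
    (hΦexp : ∀ n i, IsExpRV P (φr n i) (Φ n i))
    (hΦind : ∀ n, iIndepFun (Φ n) P) :
    ∀ᵐ ω ∂P, ∀ᶠ n : ℕ in atTop,
      (n : ℝ) ^ ((1 : ℝ) / 2 + κ) < (Nat.card {i // γ * Real.log n ≤ Φ n i ω} : ℝ) :=
  stmt_3_general P φ β c₁ γ κ hφpos hc₁ hγ hκ hκγ φr hφr Φ hΦexp hΦind
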